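/- arXiv:2604.26535 — 4 statements merged into one kernel-verified Lean document; each statement's English description precedes it below -/
import Mathlib

section
/- For every real number η > 0 and every positive integer ℓ, the fractional binomial coefficient satisfies |(-1)^ℓ · C(-η, ℓ) · Γ(η) · ℓ^(1-η) - 1| ≤ K/ℓ for some constant K depending only on η, where C(-η, ℓ) = (-η)(-η-1)···(-η-ℓ+1)/ℓ!. -/
/-!
Since `Γ(η + ℓ) = (η)_ℓ Γ(η)` and `ℓ! = Γ(ℓ + 1)`, the quantity is
`Γ(ℓ + η) ℓ^(1-η) / Γ(ℓ + 1) = exp u` with `u = log Γ(ℓ + η) - log Γ(ℓ + 1) - (η - 1) log ℓ`.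
As `log Γ` is convex and rises by exactly `log y` on `[y, y + 1]`, its slope between `ℓ + 1` and
`ℓ + η` lies between the slopes on `[ℓ, ℓ + 1]` and `[ℓ + η, ℓ + η + 1]`, i.e. between `log ℓ`
and `log (ℓ + η)`. Hence `|u| ≤ |η - 1| η / ℓ`, and `|exp u - 1| ≤ |u| exp |u|` concludes.
-/

/-- Generalized binomial coefficient `C(z, ℓ) = z(z-1)⋯(z-ℓ+1)/ℓ!`. -/
noncomputable def gbinom (z : ℝ) (ℓ : ℕ) : ℝ :=
  (descPochhammer ℝ ℓ).eval z / (Nat.factorial ℓ)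

open Real Set
open scoped Nat

lemma neg_one_pow_mul_gbinom_neg (z : ℝ) (ℓ : ℕ) :
    (-1) ^ ℓ * gbinom (-z) ℓ = (ascPochhammer ℝ ℓ).eval z / ℓ ! := by
  rw [gbinom, ← mul_div_assoc, ← ascPochhammer_eval_neg_eq_descPochhammer, neg_neg]

lemma Real.Gamma_add_nat_div_Gamma_eq {n : ℕ} (x : ℝ) (hx : ∀ k : ℕ, x ≠ -k) :
    Gamma (x + n) / Gamma x = (ascPochhammer ℝ n).eval x := by
  have h := Complex.Gamma_add_nat_div_Gamma_eq (n := n) (x : ℂ) (by exact_mod_cast hx)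
  rw [← ascPochhammer_map (algebraMap ℝ ℂ), Polynomial.eval_map_algebraMap,
    ← Complex.ofReal_natCast, ← Complex.ofReal_add, Complex.Gamma_ofReal, Complex.Gamma_ofReal,
    ← Complex.coe_algebraMap, Polynomial.aeval_algebraMap_apply_eq_algebraMap_eval] at h
  exact_mod_cast h

lemma neg_one_pow_mul_gbinom_neg_mul_Gamma {η : ℝ} (hη : 0 < η) (ℓ : ℕ) :
    (-1) ^ ℓ * gbinom (-η) ℓ * Gamma η = Gamma (ℓ + η) / Gamma (ℓ + 1) := by
  have hη' : ∀ k : ℕ, η ≠ -k := fun k => (neg_nonpos.2 k.cast_nonneg).trans_lt hη |>.ne'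
  rw [neg_one_pow_mul_gbinom_neg, ← Gamma_add_nat_div_Gamma_eq η hη', Gamma_nat_eq_factorial,
    add_comm, div_right_comm, div_mul_cancel₀ _ (Gamma_pos_of_pos hη).ne']

lemma Real.slope_log_Gamma_add_one {x : ℝ} (hx : 0 < x) :
    slope (log ∘ Gamma) x (x + 1) = log x := by
  rw [slope_def_field, Function.comp_apply, Function.comp_apply, Gamma_add_one hx.ne',
    log_mul hx.ne' (Gamma_pos_of_pos hx).ne']
  ring

lemma Real.abs_log_Gamma_add_sub_log_Gamma_add_one_le {x η : ℝ} (hx : 0 < x) (hη : 0 < η) :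
    |log (Gamma (x + η)) - log (Gamma (x + 1)) - (η - 1) * log x| ≤ |η - 1| * (η / x) := by
  rcases eq_or_ne η 1 with rfl | hη1
  · simp
  have hne : x + 1 ≠ x + η := by simpa [eq_comm] using hη1
  set σ := slope (log ∘ Gamma) (x + 1) (x + η)
  have hσ : log (Gamma (x + η)) - log (Gamma (x + 1)) = (η - 1) * σ := by
    rw [← smul_eq_mul, ← add_sub_add_left_eq_sub η 1 x, sub_smul_slope]; rfl
  have hlower : log x ≤ σ := by
    rw [← slope_log_Gamma_add_one hx, slope_comm]
    exact convexOn_log_Gamma.slope_mono (x := x + 1) (mem_Ioi.2 (by linarith))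
      (show x ∈ Ioi 0 \ {x + 1} from ⟨hx, by simp⟩)
      (show x + η ∈ Ioi 0 \ {x + 1} from ⟨mem_Ioi.2 (by linarith), hne.symm⟩) (by linarith)
  have hupper : σ ≤ log (x + η) := by
    rw [← slope_log_Gamma_add_one (by linarith : 0 < x + η)]
    refine (slope_comm _ _ _).trans_le ?_
    exact convexOn_log_Gamma.slope_mono (x := x + η) (mem_Ioi.2 (by linarith))
      (show x + 1 ∈ Ioi 0 \ {x + η} from ⟨mem_Ioi.2 (by linarith), hne⟩)
      (show x + η + 1 ∈ Ioi 0 \ {x + η} from ⟨mem_Ioi.2 (by linarith), by simp⟩) (by linarith)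
  have hlog : log (x + η) - log x ≤ η / x := by
    rw [← log_div (by linarith) hx.ne']
    linarith [log_le_sub_one_of_pos (by positivity : 0 < (x + η) / x), add_div x η x,
      div_self hx.ne']
  rw [hσ, ← mul_sub, abs_mul, abs_of_nonneg (sub_nonneg.2 hlower)]
  gcongr
  linarith

lemma Real.abs_exp_sub_one_le_abs_mul_exp_abs (u : ℝ) : |exp u - 1| ≤ |u| * exp |u| := by
  have hsub : exp u - 1 ≤ u * exp u := by
    have h := mul_le_mul_of_nonneg_right (add_one_le_exp (-u)) (exp_pos u).le
    rw [← exp_add, neg_add_cancel, exp_zero] at h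
    linarith
  rw [abs_le]
  constructor
  · linarith [neg_abs_le u, add_one_le_exp u,
      le_mul_of_one_le_right (abs_nonneg u) (one_le_exp (abs_nonneg u))]
  · exact hsub.trans
      (mul_le_mul (le_abs_self u) (exp_le_exp.2 (le_abs_self u)) (exp_pos u).le (abs_nonneg u))

lemma Real.Gamma_add_div_Gamma_add_one_mul_rpow_eq_exp {x η : ℝ} (hx : 0 < x) (hxη : 0 < x + η) :
    Gamma (x + η) / Gamma (x + 1) * x ^ (1 - η) =
      exp (log (Gamma (x + η)) - log (Gamma (x + 1)) - (η - 1) * log x) := by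
  rw [exp_sub, exp_sub, exp_log (Gamma_pos_of_pos hxη),
    exp_log (Gamma_pos_of_pos (by positivity)), rpow_def_of_pos hx,
    show log x * (1 - η) = -((η - 1) * log x) by ring, exp_neg]
  ring

theorem frac_binom_coef_asymptotics (η : ℝ) (hη : 0 < η) :
    ∃ K : ℝ, ∀ ℓ : ℕ, 1 ≤ ℓ →
      |(-1 : ℝ) ^ ℓ * gbinom (-η) ℓ * Real.Gamma η * (ℓ : ℝ) ^ (1 - η) - 1| ≤ K / ℓ := by
  set A := |η - 1| * η
  refine ⟨A * exp A, fun ℓ hℓ => ?_⟩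
  have hℓ₀ : (0 : ℝ) < ℓ := by positivity
  have hℓ₁ : (1 : ℝ) ≤ ℓ := by exact_mod_cast hℓ
  rw [neg_one_pow_mul_gbinom_neg_mul_Gamma hη,
    Gamma_add_div_Gamma_add_one_mul_rpow_eq_exp hℓ₀ (by positivity)]
  set u := log (Gamma (ℓ + η)) - log (Gamma (ℓ + 1)) - (η - 1) * log ℓ
  have hu : |u| ≤ A / ℓ := by
    simpa only [A, mul_div_assoc] using abs_log_Gamma_add_sub_log_Gamma_add_one_le hℓ₀ hη
  calc |exp u - 1| ≤ |u| * exp |u| := abs_exp_sub_one_le_abs_mul_exp_abs u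
    _ ≤ A / ℓ * exp A := by
      gcongr
      exact hu.trans (div_le_self (by positivity) hℓ₁)
    _ = A * exp A / ℓ := div_mul_eq_mul_div _ _ _
end

section
/- Let η > 0 and suppose p and q are polynomials with real coefficients such that sup_{|z| ≤ 1, z ∈ ℂ} |(1-z)^η - p(z)/q(z)| < ε. Then for any δ ∈ (0,1) with δ^(-η)·ε < 1, we have sup_{|z| ≤ 1-δ} |(1-z)^(-η) - q(z)/p(z)| < δ^(-2η)·ε / (1 - δ^(-η)·ε). -/
/-!
On `‖z‖ ≤ 1 - δ` we have `‖(1 - z) ^ η‖ ≥ δ ^ η > ε`, so the approximant `r = p(z)/q(z)` of `w = (1 - z) ^ η`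
satisfies `‖r‖ > δ ^ η - ε > 0`. Then `w⁻¹ - r⁻¹ = w⁻¹ (r - w) r⁻¹` gives the bound `ε / (δ ^ η (δ ^ η - ε))`,
which is the stated right-hand side rewritten.
-/

open Polynomial

theorem inv_sq_mul_div_one_sub_inv_mul {a ε : ℝ} (ha : a ≠ 0) :
    a⁻¹ ^ 2 * ε / (1 - a⁻¹ * ε) = ε / (a * (a - ε)) := by
  rw [show 1 - a⁻¹ * ε = a⁻¹ * (a - ε) by field_simp, ← div_div, sq, mul_assoc,
    mul_div_cancel_left₀ _ (inv_ne_zero ha), inv_mul_eq_div, div_div]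

theorem norm_inv_sub_inv_eq {𝕜 : Type*} [NormedDivisionRing 𝕜] {w r : 𝕜} (hw : w ≠ 0) (hr : r ≠ 0) :
    ‖w⁻¹ - r⁻¹‖ = ‖w - r‖ / (‖w‖ * ‖r‖) := by
  rw [inv_sub_inv' hw hr, norm_mul, norm_mul, norm_inv, norm_inv, norm_sub_rev]
  field_simp

theorem norm_inv_sub_inv_lt {𝕜 : Type*} [NormedDivisionRing 𝕜] {w r : 𝕜} {a ε : ℝ}
    (hεa : ε < a) (ha : a ≤ ‖w‖) (hwr : ‖w - r‖ < ε) :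
    ‖w⁻¹ - r⁻¹‖ < ε / (a * (a - ε)) := by
  have hε : 0 < ε := (norm_nonneg _).trans_lt hwr
  have hr : a - ε < ‖r‖ := by linarith [norm_sub_norm_le w r]
  have hwr_pos : 0 < ‖w‖ * ‖r‖ := by nlinarith
  rw [norm_inv_sub_inv_eq (norm_pos_iff.mp (by linarith)) (norm_pos_iff.mp (by linarith))]
  calc ‖w - r‖ / (‖w‖ * ‖r‖) < ε / (‖w‖ * ‖r‖) := div_lt_div_of_pos_right hwr hwr_pos
    _ ≤ ε / (a * (a - ε)) := by
      gcongr
      exact mul_pos (by linarith) (by linarith)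

theorem rpow_le_norm_one_sub_cpow {z : ℂ} {δ η : ℝ} (hδ : 0 ≤ δ) (hη : 0 ≤ η) (hz : ‖z‖ ≤ 1 - δ) :
    δ ^ η ≤ ‖(1 - z) ^ (η : ℂ)‖ := by
  have h := norm_sub_norm_le (1 : ℂ) z
  rw [norm_one] at h
  rw [Complex.norm_cpow_real]
  exact Real.rpow_le_rpow hδ (by linarith) hη

theorem rational_inversion_trick_general (η ε : ℝ) (hη : 0 < η)
    (p q : Polynomial ℝ)
    (happrox : ∀ z : ℂ, ‖z‖ ≤ 1 →
      ‖(1 - z) ^ (η : ℂ) - (aeval z p) / (aeval z q)‖ < ε)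
    (δ : ℝ) (hδ0 : 0 < δ) (hsmall : δ ^ (-η) * ε < 1) :
    ∀ z : ℂ, ‖z‖ ≤ 1 - δ →
      ‖(1 - z) ^ (-(η : ℂ)) - (aeval z q) / (aeval z p)‖ <
        δ ^ (-2 * η) * ε / (1 - δ ^ (-η) * ε) := by
  intro z hz
  have hδη : 0 < δ ^ η := Real.rpow_pos_of_pos hδ0 η
  have hεδ : ε < δ ^ η := by
    rwa [Real.rpow_neg hδ0.le, inv_mul_lt_iff₀ hδη, mul_one] at hsmall
  have hrpow_neg_two : δ ^ (-2 * η) = (δ ^ η)⁻¹ ^ 2 := by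
    rw [show -2 * η = -η * (2 : ℕ) by push_cast; ring, Real.rpow_mul_natCast hδ0.le,
      Real.rpow_neg hδ0.le]
  rw [Complex.cpow_neg, ← inv_div, hrpow_neg_two, Real.rpow_neg hδ0.le,
    inv_sq_mul_div_one_sub_inv_mul hδη.ne']
  exact norm_inv_sub_inv_lt hεδ (rpow_le_norm_one_sub_cpow hδ0.le hη.le hz)
    (happrox z (by linarith))

theorem rational_inversion_trick (η ε : ℝ) (hη : 0 < η) (hε : 0 < ε)
    (p q : Polynomial ℝ)
    (happrox : ∀ z : ℂ, ‖z‖ ≤ 1 →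
      ‖(1 - z) ^ (η : ℂ) - (aeval z p) / (aeval z q)‖ < ε)
    (δ : ℝ) (hδ0 : 0 < δ) (hδ1 : δ < 1) (hsmall : δ ^ (-η) * ε < 1) :
    ∀ z : ℂ, ‖z‖ ≤ 1 - δ →
      ‖(1 - z) ^ (-(η : ℂ)) - (aeval z q) / (aeval z p)‖ <
        δ ^ (-2 * η) * ε / (1 - δ ^ (-η) * ε) :=
  rational_inversion_trick_general η ε hη p q happrox δ hδ0 hsmall
end

section
/- For γ > 1/2 there is a constant K(γ) such that for all μ > 0 and all Δt ∈ (0, 1], Δt · Σ_{j=1}^∞ (jΔt)^(2γ-2) e^(-2μ jΔt) ≤ K(γ) · (1 + μ^(1-2γ) + μ^(-1)). -/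
open Real Set MeasureTheory
open scoped Nat

/-!
Substituting `h = μ Δt` pulls out the factor `μ ^ (1 - 2γ)` and leaves the right-endpoint
Riemann sum `h ∑ f((j+1)h)` of `f x = x ^ a e^{-2x}`, `a = 2γ - 2 > -1`. Writing `a = b + c` with
`b = max a 0` and `c = min a 0 ∈ (-1, 0]`, the factor `x ^ b e^{-x}` is bounded by `⌈b⌉!`, and
`x ^ c e^{-x}` is decreasing, so its right-endpoint Riemann sums are bounded by its integral
`Γ(c + 1)`. Hence the series is at most `⌈b⌉! Γ(c + 1) μ ^ (1 - 2γ)` for every `Δt > 0`.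
-/

lemma rpow_mul_exp_neg_le_factorial {b t : ℝ} (hb : 0 ≤ b) (ht : 0 ≤ t) :
    t ^ b * exp (-t) ≤ (⌈b⌉₊)! := by
  obtain h | h := le_total t 1
  · calc t ^ b * exp (-t) ≤ 1 * 1 :=
          mul_le_mul (rpow_le_one ht h hb) (exp_le_one_iff.2 (by linarith)) (by positivity)
            zero_le_one
      _ ≤ (⌈b⌉₊)! := by exact_mod_cast (one_mul 1).trans_le (Nat.factorial_pos ⌈b⌉₊)
  · have hpow : t ^ b ≤ (⌈b⌉₊)! * exp t :=
      calc t ^ b ≤ t ^ ⌈b⌉₊ := by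
            simpa only [rpow_natCast] using rpow_le_rpow_of_exponent_le h (Nat.le_ceil b)
        _ ≤ (⌈b⌉₊)! * exp t := (div_le_iff₀' (by positivity)).1 (pow_div_factorial_le_exp t ht _)
    calc t ^ b * exp (-t) ≤ (⌈b⌉₊)! * exp t * exp (-t) := by gcongr
      _ = (⌈b⌉₊)! := by rw [mul_assoc, ← exp_add, add_neg_cancel, exp_zero, mul_one]

/-- Unlike `AntitoneOn.sum_range_le_integral`, this allows `g` to be unbounded near `0`. -/
theorem AntitoneOn.mul_sum_range_le_integral {g : ℝ → ℝ} {h : ℝ} (hh : 0 < h)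
    (anti : AntitoneOn g (Ioi 0)) (integrable : IntegrableOn g (Ioi 0))
    (nonneg : ∀ x ∈ Ioi 0, 0 ≤ g x) (n : ℕ) :
    h * ∑ j ∈ Finset.range n, g ((j + 1) * h) ≤ ∫ x in Ioi 0, g x := by
  have cell_le (j : ℕ) : (j : ℝ) * h ≤ (j + 1) * h := by nlinarith
  have cell_pos (j : ℕ) : Ioc ((j : ℝ) * h) ((j + 1) * h) ⊆ Ioi 0 :=
    fun x hx => lt_of_le_of_lt (by positivity) hx.1
  have cell (j : ℕ) : h * g ((j + 1) * h) ≤ ∫ x in (j * h)..((j + 1) * h), g x := by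
    rw [intervalIntegral.integral_of_le (cell_le j)]
    calc h * g ((j + 1) * h) = ∫ _ in Ioc ((j : ℝ) * h) ((j + 1) * h), g ((j + 1) * h) := by
          rw [setIntegral_const, Real.volume_real_Ioc_of_le (cell_le j), smul_eq_mul]; ring
      _ ≤ ∫ x in Ioc ((j : ℝ) * h) ((j + 1) * h), g x :=
          setIntegral_mono_on (integrableOn_const measure_Ioc_lt_top.ne)
            (integrable.mono_set (cell_pos j)) measurableSet_Ioc
            fun x hx => anti (cell_pos j hx) (mem_Ioi.2 (by positivity)) hx.2
  calc h * ∑ j ∈ Finset.range n, g ((j + 1) * h)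
      ≤ ∑ j ∈ Finset.range n, ∫ x in (j * h)..((j + 1) * h), g x := by
        rw [Finset.mul_sum]; exact Finset.sum_le_sum fun j _ => cell j
    _ = ∫ x in (0 : ℝ)..(n * h), g x := by
        simpa using intervalIntegral.sum_integral_adjacent_intervals (a := fun j : ℕ => j * h)
          fun j _ => (intervalIntegrable_iff_integrableOn_Ioc_of_le (by simpa using cell_le j)).2
            (integrable.mono_set (by simpa using cell_pos j))
    _ ≤ ∫ x in Ioi 0, g x := by
        rw [intervalIntegral.integral_of_le (by positivity)]
        exact setIntegral_mono_set integrable (ae_restrict_of_forall_mem measurableSet_Ioi nonneg)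
          Ioc_subset_Ioi_self.eventuallyLE

theorem mul_tsum_le_integral_of_le_of_antitoneOn {f g : ℝ → ℝ} {h : ℝ} (hh : 0 < h)
    (anti : AntitoneOn g (Ioi 0)) (integrable : IntegrableOn g (Ioi 0))
    (hf : ∀ x ∈ Ioi 0, 0 ≤ f x) (hfg : ∀ x ∈ Ioi 0, f x ≤ g x) :
    h * ∑' j : ℕ, f ((j + 1) * h) ≤ ∫ x in Ioi 0, g x := by
  have node_pos (j : ℕ) : ((j : ℝ) + 1) * h ∈ Ioi 0 := mem_Ioi.2 (by positivity)
  rw [← le_div_iff₀' hh]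
  refine Real.tsum_le_of_sum_range_le (fun j => hf _ (node_pos j)) fun n => ?_
  rw [le_div_iff₀' hh]
  calc h * ∑ j ∈ Finset.range n, f ((j + 1) * h)
      ≤ h * ∑ j ∈ Finset.range n, g ((j + 1) * h) := by
        gcongr with j; exact hfg _ (node_pos j)
    _ ≤ ∫ x in Ioi 0, g x :=
        anti.mul_sum_range_le_integral hh integrable (fun x hx => (hf x hx).trans (hfg x hx)) n

lemma antitoneOn_exp_neg_mul_rpow {c : ℝ} (hc : c ≤ 0) :
    AntitoneOn (fun x => exp (-x) * x ^ c) (Ioi 0) := fun _ hx _ _ hxy =>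
  mul_le_mul (exp_le_exp.2 (neg_le_neg hxy)) (rpow_le_rpow_of_nonpos hx hxy hc)
    (rpow_nonneg (hx.out.le.trans hxy) c) (exp_pos _).le

lemma rpow_mul_exp_neg_two_mul_le {a x : ℝ} (hx : 0 < x) :
    x ^ a * exp (-(2 * x)) ≤ (⌈max a 0⌉₊)! * (exp (-x) * x ^ min a 0) := by
  have split : x ^ a * exp (-(2 * x)) = (x ^ max a 0 * exp (-x)) * (exp (-x) * x ^ min a 0) := by
    nth_rw 1 [← add_zero a, ← max_add_min a 0]
    rw [rpow_add hx, two_mul, neg_add, exp_add]; ring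
  rw [split]
  gcongr
  exact rpow_mul_exp_neg_le_factorial (le_max_right a 0) hx.le

theorem mul_tsum_rpow_mul_exp_neg_two_mul_le {a h : ℝ} (ha : -1 < a) (hh : 0 < h) :
    h * ∑' j : ℕ, ((j + 1) * h) ^ a * exp (-(2 * ((j + 1) * h))) ≤
      (⌈max a 0⌉₊)! * Gamma (min a 0 + 1) := by
  have hs : 0 < min a 0 + 1 := by have := lt_min ha neg_one_lt_zero; linarith
  have gamma_integrable := GammaIntegral_convergent hs
  simp only [add_sub_cancel_right] at gamma_integrable
  rw [Gamma_eq_integral hs, add_sub_cancel_right, ← integral_const_mul]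
  refine mul_tsum_le_integral_of_le_of_antitoneOn hh ?_ (gamma_integrable.const_mul _)
    (fun x hx => by have : (0 : ℝ) < x := hx; positivity) fun x hx => rpow_mul_exp_neg_two_mul_le hx
  exact fun x hx y hy hxy => mul_le_mul_of_nonneg_left
    (antitoneOn_exp_neg_mul_rpow (min_le_right a 0) hx hy hxy) (by positivity)

lemma mul_tsum_rpow_mul_exp_eq_rpow_mul {a μ Δt : ℝ} (hμ : 0 < μ) (hΔt : 0 ≤ Δt) :
    Δt * ∑' j : ℕ, ((j + 1) * Δt) ^ a * exp (-2 * μ * (j + 1) * Δt) =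
      μ ^ (-(a + 1)) *
        ((μ * Δt) * ∑' j : ℕ, ((j + 1) * (μ * Δt)) ^ a * exp (-(2 * ((j + 1) * (μ * Δt))))) := by
  rw [← tsum_mul_left, ← tsum_mul_left, ← tsum_mul_left]
  congr 1 with j
  rw [mul_left_comm _ μ, mul_rpow hμ.le (by positivity), rpow_neg hμ.le, rpow_add_one hμ.ne']
  field_simp

theorem riemann_series_bound (γ : ℝ) (hγ : 1 / 2 < γ) :
    ∃ K : ℝ, 0 < K ∧ ∀ μ Δt : ℝ, 0 < μ → 0 < Δt → Δt ≤ 1 →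
      Δt * (∑' j : ℕ, (((j : ℝ) + 1) * Δt) ^ (2 * γ - 2) *
        Real.exp (-2 * μ * ((j : ℝ) + 1) * Δt)) ≤
      K * (1 + μ ^ (1 - 2 * γ) + μ⁻¹) := by
  set K := (⌈max (2 * γ - 2) 0⌉₊)! * Gamma (min (2 * γ - 2) 0 + 1)
  have hK : 0 < K := mul_pos (mod_cast Nat.factorial_pos _)
    (Gamma_pos_of_pos (by have := lt_min (by linarith : -1 < 2 * γ - 2) neg_one_lt_zero; linarith))
  refine ⟨K, hK, fun μ Δt hμ hΔt _ => ?_⟩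
  have hμγ : 0 ≤ μ ^ (1 - 2 * γ) := by positivity
  calc Δt * ∑' j : ℕ, ((j + 1) * Δt) ^ (2 * γ - 2) * exp (-2 * μ * (j + 1) * Δt)
      = μ ^ (1 - 2 * γ) * ((μ * Δt) * ∑' j : ℕ, ((j + 1) * (μ * Δt)) ^ (2 * γ - 2) *
          exp (-(2 * ((j + 1) * (μ * Δt))))) := by
        rw [mul_tsum_rpow_mul_exp_eq_rpow_mul hμ hΔt.le]; ring_nf
    _ ≤ μ ^ (1 - 2 * γ) * K := by
        gcongr; exact mul_tsum_rpow_mul_exp_neg_two_mul_le (by linarith) (by positivity)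
    _ ≤ K * (1 + μ ^ (1 - 2 * γ) + μ⁻¹) := by
        have : 0 ≤ μ⁻¹ := by positivity
        nlinarith
end

section
/- Let γ > 1/2, μ > 0, λ > 0. The stationary covariance function C(h) = (λ e^{-μ|h|} / ((2μ)^{2γ-1} Γ(γ)²)) ∫_0^∞ (u + 2μ|h|)^{γ-1} u^{γ-1} e^{-u} du satisfies 0 < C(h) ≤ C(0) for all h ∈ ℝ, and C(h) → 0 as |h| → ∞. -/
/-!
Put `x = μ|h|` and `I(a) = ∫₀^∞ (u + a)^(γ-1) u^(γ-1) e^(-u) du`; then `C(h)` is a fixed positive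
multiple of `e^(-x) I(2x)`. Since `(u + a)^p ≤ (1 + 2^p)(u^p + a^p)`, the integrand of `I(a)` is
dominated by the Gamma integrands of `Γ(2γ - 1)` and `Γ(γ)`, which gives convergence (this is where
`γ > 1/2` enters) and `I(a) = O(1 + a^(γ-1))`, hence `e^(-x) I(2x) → 0`.
For `C(h) ≤ C(0)`: if `γ ≤ 1`, then `(u + 2x)^(γ-1) ≤ u^(γ-1)` and `e^(-x) ≤ 1`; if `γ ≥ 1`, the
substitution `s = u + x` turns `e^(-x) I(2x)` into `∫ₓ^∞ (s² - x²)^(γ-1) e^(-s) ds`, which is at most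
`∫₀^∞ s^(2γ-2) e^(-s) ds = I(0)`.
-/

open MeasureTheory Filter

/-- Stationary covariance function of the fractional OU-type process. -/
noncomputable def statCov (γ μ lam : ℝ) (h : ℝ) : ℝ :=
  lam * Real.exp (-μ * |h|) / ((2 * μ) ^ (2 * γ - 1) * Real.Gamma γ ^ 2) *
    ∫ u in Set.Ioi (0 : ℝ), (u + 2 * μ * |h|) ^ (γ - 1) * u ^ (γ - 1) * Real.exp (-u)

open Set Real

theorem Real.rpow_add_le_one_add_two_rpow_mul {u a : ℝ} (p : ℝ) (hu : 0 < u) (ha : 0 ≤ a) :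
    (u + a) ^ p ≤ (1 + 2 ^ p) * (u ^ p + a ^ p) := by
  have hup : 0 ≤ u ^ p := rpow_nonneg hu.le p
  have hap : 0 ≤ a ^ p := rpow_nonneg ha p
  have h2p : 0 ≤ (2 : ℝ) ^ p := rpow_nonneg zero_le_two p
  rcases le_total p 0 with hp | hp
  · calc (u + a) ^ p ≤ u ^ p := rpow_le_rpow_of_nonpos hu (by linarith) hp
      _ ≤ (1 + 2 ^ p) * (u ^ p + a ^ p) := by nlinarith
  · calc (u + a) ^ p ≤ (2 * max u a) ^ p := by gcongr; linarith [le_max_left u a, le_max_right u a]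
      _ = 2 ^ p * max (u ^ p) (a ^ p) := by
        rw [mul_rpow zero_le_two (hu.le.trans (le_max_left u a))]
        rcases le_total u a with h | h
        · rw [max_eq_right h, max_eq_right (rpow_le_rpow hu.le h hp)]
        · rw [max_eq_left h, max_eq_left (rpow_le_rpow ha h hp)]
      _ ≤ (1 + 2 ^ p) * (u ^ p + a ^ p) := by
        gcongr
        · linarith
        · exact max_le_add_of_nonneg hup hap

theorem integral_Ioi_comp_sub_right (f : ℝ → ℝ) (x : ℝ) :
    ∫ s in Ioi x, f (s - x) = ∫ u in Ioi 0, f u := by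
  have h := (measurePreserving_add_right volume x).setIntegral_preimage_emb
    (measurableEmbedding_addRight x) (fun s => f (s - x)) (Ioi x)
  simp only [add_sub_cancel_right, preimage_add_const_Ioi, sub_self] at h
  exact h.symm

noncomputable def covIntegrand (γ a u : ℝ) : ℝ := (u + a) ^ (γ - 1) * u ^ (γ - 1) * exp (-u)

noncomputable def covIntegral (γ a : ℝ) : ℝ := ∫ u in Ioi 0, covIntegrand γ a u

section

variable {γ a u : ℝ}

theorem covIntegrand_pos (hu : 0 < u) (ha : 0 ≤ a) : 0 < covIntegrand γ a u := by
  unfold covIntegrand; have := add_pos_of_pos_of_nonneg hu ha; positivity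

theorem covIntegrand_le (hu : 0 < u) (ha : 0 ≤ a) :
    covIntegrand γ a u ≤ (1 + 2 ^ (γ - 1)) *
      (exp (-u) * u ^ (2 * γ - 1 - 1) + a ^ (γ - 1) * (exp (-u) * u ^ (γ - 1))) := by
  have hsq : u ^ (2 * γ - 1 - 1) = u ^ (γ - 1) * u ^ (γ - 1) := by
    rw [← rpow_add hu]; ring_nf
  calc covIntegrand γ a u
      ≤ (1 + 2 ^ (γ - 1)) * (u ^ (γ - 1) + a ^ (γ - 1)) * u ^ (γ - 1) * exp (-u) := by
        unfold covIntegrand; gcongr; exact rpow_add_le_one_add_two_rpow_mul _ hu ha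
    _ = _ := by rw [hsq]; ring

theorem integrableOn_covIntegrand (hγ : 1 / 2 < γ) (ha : 0 ≤ a) :
    IntegrableOn (covIntegrand γ a) (Ioi 0) := by
  have hdom : IntegrableOn (fun u => (1 + 2 ^ (γ - 1)) *
      (exp (-u) * u ^ (2 * γ - 1 - 1) + a ^ (γ - 1) * (exp (-u) * u ^ (γ - 1)))) (Ioi 0) :=
    ((GammaIntegral_convergent (by linarith)).add
      ((GammaIntegral_convergent (by linarith)).const_mul _)).const_mul _
  refine hdom.mono' (by unfold covIntegrand; fun_prop) ?_
  filter_upwards [ae_restrict_mem measurableSet_Ioi] with u hu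
  rw [norm_of_nonneg (covIntegrand_pos hu ha).le]
  exact covIntegrand_le hu ha

theorem covIntegral_pos (hγ : 1 / 2 < γ) (ha : 0 ≤ a) : 0 < covIntegral γ a := by
  rw [covIntegral, setIntegral_pos_iff_support_of_nonneg_ae _ (integrableOn_covIntegrand hγ ha)]
  · have : Ioi 0 ⊆ Function.support (covIntegrand γ a) := fun u hu => (covIntegrand_pos hu ha).ne'
    simp [inter_eq_right.2 this]
  · filter_upwards [ae_restrict_mem measurableSet_Ioi] with u hu
    exact (covIntegrand_pos hu ha).le

theorem covIntegral_le (hγ : 1 / 2 < γ) (ha : 0 ≤ a) :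
    covIntegral γ a ≤ (1 + 2 ^ (γ - 1)) * (Gamma (2 * γ - 1) + a ^ (γ - 1) * Gamma γ) := by
  have h₁ := GammaIntegral_convergent (by linarith : 0 < 2 * γ - 1)
  have h₂ := (GammaIntegral_convergent (by linarith : 0 < γ)).const_mul (a ^ (γ - 1))
  rw [Gamma_eq_integral (by linarith), Gamma_eq_integral (by linarith), ← integral_const_mul,
    ← integral_add h₁ h₂, ← integral_const_mul]
  exact setIntegral_mono_on (integrableOn_covIntegrand hγ ha) ((h₁.add h₂).const_mul _)
    measurableSet_Ioi fun u hu => covIntegrand_le hu ha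

theorem exp_neg_mul_covIntegrand_le_of_le_one (hγ : γ ≤ 1) {x : ℝ} (hx : 0 ≤ x) (hu : 0 < u) :
    exp (-x) * covIntegrand γ (2 * x) u ≤ covIntegrand γ 0 u := by
  have hexp : exp (-x) ≤ 1 := exp_le_one_iff.2 (by linarith)
  calc exp (-x) * covIntegrand γ (2 * x) u ≤ 1 * covIntegrand γ (2 * x) u := by
        gcongr; exact (covIntegrand_pos hu (by linarith)).le
    _ ≤ covIntegrand γ 0 u := by
        rw [one_mul]; unfold covIntegrand
        gcongr ?_ * _ * _
        exact rpow_le_rpow_of_nonpos (by linarith) (by linarith) (by linarith)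

theorem exp_neg_mul_covIntegrand_sub_le_of_one_le (hγ : 1 ≤ γ) {x s : ℝ} (hx : 0 ≤ x) (hs : x < s) :
    exp (-x) * covIntegrand γ (2 * x) (s - x) ≤ covIntegrand γ 0 s := by
  have hexp : exp (-x) * exp (-(s - x)) = exp (-s) := by rw [← exp_add]; ring_nf
  have hprod : (s + x) ^ (γ - 1) * (s - x) ^ (γ - 1) ≤ s ^ (γ - 1) * s ^ (γ - 1) := by
    rw [← mul_rpow (by linarith) (by linarith), ← mul_rpow (by linarith) (by linarith)]
    exact rpow_le_rpow (by nlinarith) (by nlinarith) (by linarith)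
  calc exp (-x) * covIntegrand γ (2 * x) (s - x)
      = (s + x) ^ (γ - 1) * (s - x) ^ (γ - 1) * (exp (-x) * exp (-(s - x))) := by
        unfold covIntegrand; ring_nf
    _ ≤ covIntegrand γ 0 s := by
        rw [hexp, covIntegrand, add_zero]; gcongr

theorem exp_neg_mul_covIntegral_two_mul_le (hγ : 1 / 2 < γ) {x : ℝ} (hx : 0 ≤ x) :
    exp (-x) * covIntegral γ (2 * x) ≤ covIntegral γ 0 := by
  have hI₀ := integrableOn_covIntegrand hγ le_rfl
  rcases le_total γ 1 with hγ₁ | hγ₁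
  · rw [covIntegral, ← integral_const_mul]
    exact setIntegral_mono_on ((integrableOn_covIntegrand hγ (by linarith)).const_mul _) hI₀
      measurableSet_Ioi fun u hu => exp_neg_mul_covIntegrand_le_of_le_one hγ₁ hx hu
  · rw [covIntegral, ← integral_const_mul, ← integral_Ioi_comp_sub_right _ x]
    calc ∫ s in Ioi x, exp (-x) * covIntegrand γ (2 * x) (s - x)
        ≤ ∫ s in Ioi x, covIntegrand γ 0 s := by
          refine integral_mono_of_nonneg ?_ (hI₀.mono_set (Ioi_subset_Ioi hx)) ?_
          all_goals filter_upwards [ae_restrict_mem measurableSet_Ioi] with s hs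
          · exact mul_nonneg (exp_pos _).le (covIntegrand_pos (sub_pos.2 hs) (by linarith)).le
          · exact exp_neg_mul_covIntegrand_sub_le_of_one_le hγ₁ hx hs
      _ ≤ covIntegral γ 0 := by
          refine setIntegral_mono_set hI₀ ?_ (Ioi_subset_Ioi hx).eventuallyLE
          filter_upwards [ae_restrict_mem measurableSet_Ioi] with s hs
          exact (covIntegrand_pos hs le_rfl).le

theorem tendsto_exp_neg_mul_covIntegral_two_mul (hγ : 1 / 2 < γ) :
    Tendsto (fun x => exp (-x) * covIntegral γ (2 * x)) atTop (nhds 0) := by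
  have hexp : Tendsto (fun x : ℝ => exp (-x)) atTop (nhds 0) := tendsto_exp_neg_atTop_nhds_zero
  have hpow : Tendsto (fun x : ℝ => x ^ (γ - 1) * exp (-x)) atTop (nhds 0) := by
    simpa using tendsto_rpow_mul_exp_neg_mul_atTop_nhds_zero (γ - 1) 1 one_pos
  have hbound := ((hexp.const_mul (Gamma (2 * γ - 1))).add
    (hpow.const_mul (2 ^ (γ - 1) * Gamma γ))).const_mul (1 + 2 ^ (γ - 1))
  simp only [mul_zero, add_zero] at hbound
  refine squeeze_zero' ?_ ?_ hbound
  all_goals filter_upwards [eventually_ge_atTop 0] with x hx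
  · exact mul_nonneg (exp_pos _).le (covIntegral_pos hγ (by linarith)).le
  · calc exp (-x) * covIntegral γ (2 * x)
        ≤ exp (-x) * ((1 + 2 ^ (γ - 1)) * (Gamma (2 * γ - 1) + (2 * x) ^ (γ - 1) * Gamma γ)) := by
          gcongr; exact covIntegral_le hγ (by linarith)
      _ = _ := by rw [mul_rpow zero_le_two hx]; ring

end

theorem statCov_eq (γ μ lam h : ℝ) :
    statCov γ μ lam h = lam / ((2 * μ) ^ (2 * γ - 1) * Gamma γ ^ 2) *
      (exp (-(μ * |h|)) * covIntegral γ (2 * (μ * |h|))) := by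
  rw [statCov, covIntegral, ← mul_assoc 2 μ |h|, neg_mul]
  simp only [covIntegrand]
  ring

theorem statCov_bounds (γ μ lam : ℝ) (hγ : 1 / 2 < γ) (hμ : 0 < μ) (hlam : 0 < lam) :
    (∀ h : ℝ, 0 < statCov γ μ lam h ∧ statCov γ μ lam h ≤ statCov γ μ lam 0) ∧
      Tendsto (statCov γ μ lam) (cocompact ℝ) (nhds 0) := by
  have hc : 0 < lam / ((2 * μ) ^ (2 * γ - 1) * Gamma γ ^ 2) := by
    have := Gamma_pos_of_pos (by linarith : 0 < γ); positivity
  have hx : ∀ h : ℝ, 0 ≤ μ * |h| := fun h => by positivity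
  refine ⟨fun h => ⟨?_, ?_⟩, ?_⟩
  · rw [statCov_eq]
    exact mul_pos hc (mul_pos (exp_pos _) (covIntegral_pos hγ (by linarith [hx h])))
  · rw [statCov_eq, statCov_eq, abs_zero, mul_zero, mul_zero, neg_zero, exp_zero, one_mul]
    exact mul_le_mul_of_nonneg_left (exp_neg_mul_covIntegral_two_mul_le hγ (hx h)) hc.le
  · have hlim := ((tendsto_exp_neg_mul_covIntegral_two_mul hγ).comp
      ((tendsto_norm_cocompact_atTop (E := ℝ)).const_mul_atTop hμ)).const_mul
      (lam / ((2 * μ) ^ (2 * γ - 1) * Gamma γ ^ 2))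
    rw [mul_zero] at hlim
    exact hlim.congr fun h => (statCov_eq γ μ lam h).symm
end
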